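/- Let k be a field, A a commutative k-algebra, a ∈ A ⊗_k A with a · τ(a) = 1 (τ the flip of A ⊗_k A), and assume μ(a) = ε·1_A where μ : A ⊗_k A → A is the multiplication map and ε ∈ {1, −1}. Let M be a finite-dimensional A-module (finite-dimensional over k) and R = R(A, a, M) the associated unitary R-matrix on M (the flip of M ⊗_k M followed by the action of a). Then for every n ≥ 2, the trace of R₁ R₂ ⋯ R_{n−1} on M^{⊗n} equals ε^{n−1} · dim_k M, where R_i = id^{⊗(i−1)} ⊗ R ⊗ id^{⊗(n−i−1)}. -/

import Mathlib

open TensorProduct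

noncomputable section

universe u

variable (k : Type u) [Field k]

/-- `W m` is the left-bracketed `(m+1)`-fold tensor power of `M`. -/
def W (M : Type u) [AddCommGroup M] [Module k M] : ℕ → ModuleCat.{u} k
  | 0 => ModuleCat.of k M
  | m + 1 => ModuleCat.of k (TensorProduct k (W M m) M)

variable {k}

/-- `RRlin Rm m i` is the endomorphism `R_{i+1} = id^{⊗i} ⊗ R ⊗ id^{⊗(m-1-i)}` of the
`(m+1)`-fold tensor power `W M m`, acting on the `(i+1)`-st and `(i+2)`-nd tensor factors,
transported along associators to the fixed left bracketing. -/
def RRlin {M : Type u} [AddCommGroup M] [Module k M]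
    (Rm : M ⊗[k] M →ₗ[k] M ⊗[k] M) : (m : ℕ) → (i : ℕ) → i + 1 ≤ m →
    Module.End k (W k M m)
  | m + 1, i, _ =>
    if hi : i + 1 ≤ m then
      TensorProduct.map (RRlin Rm m i hi) LinearMap.id
    else
      match m with
      | 0 => Rm
      | m' + 1 =>
        (TensorProduct.assoc k (W k M m') M M).symm.toLinearMap
          ∘ₗ LinearMap.lTensor (W k M m') Rm
          ∘ₗ (TensorProduct.assoc k (W k M m') M M).toLinearMap

variable (k) in
/-- The action of an element `z ∈ A ⊗[k] A` on `M ⊗[k] M`, where `x ⊗ y` acts by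
`m ⊗ n ↦ (x • m) ⊗ (y • n)`. -/
def tensorSquareAction (A : Type u) [CommRing A] [Algebra k A]
    (M : Type u) [AddCommGroup M] [Module k M] [Module A M] [IsScalarTower k A M] :
    A ⊗[k] A →ₗ[k] (M ⊗[k] M →ₗ[k] M ⊗[k] M) :=
  TensorProduct.homTensorHomMap (.id k) M M M M
    ∘ₗ TensorProduct.map (Algebra.lsmul k k M).toLinearMap (Algebra.lsmul k k M).toLinearMap

variable (k) in
/-- The map `R(A,a,M) : M ⊗[k] M → M ⊗[k] M`: the flip `m ⊗ n ↦ n ⊗ m` followed by the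
action of `a ∈ A ⊗[k] A`. -/
def Rmat (A : Type u) [CommRing A] [Algebra k A]
    (M : Type u) [AddCommGroup M] [Module k M] [Module A M] [IsScalarTower k A M]
    (a : A ⊗[k] A) : M ⊗[k] M →ₗ[k] M ⊗[k] M :=
  tensorSquareAction k A M a ∘ₗ (TensorProduct.comm k M M).toLinearMap

/-! Tracing out the last tensor factor preserves traces. For `R = R(A,a,M)` the partial trace
over the second factor of `M ⊗ M` is multiplication by `μ(a) = ε`, because for `a = x ⊗ y` the
partial trace of `(x ⊗ y) ∘ flip` is `x ∘ y`. Since `R₁ ⋯ R_{m+1} = (R₁ ⋯ R_m ⊗ id) ∘ R_{m+1}`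
and `R_{m+1}` only involves the last two factors, tracing out the last factor replaces `R_{m+1}`
by `ε · id`; hence each factor contributes `ε`, starting from `tr R = ε · dim M`. -/

section PartialTrace

variable (R : Type*) [CommRing R]
variable (V N : Type*) [AddCommGroup V] [Module R V] [Module.Free R V] [Module.Finite R V]
  [AddCommGroup N] [Module R N] [Module.Free R N] [Module.Finite R N]

def partialTrace : Module.End R (V ⊗[R] N) →ₗ[R] Module.End R V :=
  (TensorProduct.rid R (Module.End R V)).toLinearMap
    ∘ₗ LinearMap.lTensor (Module.End R V) (LinearMap.trace R N)
    ∘ₗ (homTensorHomEquiv R V N V N).symm.toLinearMap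

variable {R V N}

theorem Module.End.tensorProduct_induction_on {P : Module.End R (V ⊗[R] N) → Prop}
    (Φ : Module.End R (V ⊗[R] N)) (zero : P 0) (add : ∀ Φ Ψ, P Φ → P Ψ → P (Φ + Ψ))
    (map : ∀ f g, P (TensorProduct.map f g)) : P Φ := by
  obtain ⟨z, rfl⟩ := (homTensorHomEquiv R V N V N).surjective Φ
  induction z using TensorProduct.induction_on with
  | zero => simpa using zero
  | tmul f g => simpa using map f g
  | add x y hx hy => simpa using add _ _ hx hy

@[simp]
theorem partialTrace_map (f : Module.End R V) (g : Module.End R N) :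
    partialTrace R V N (TensorProduct.map f g) = LinearMap.trace R N g • f := by
  rw [← homTensorHomMap_apply, ← homTensorHomEquiv_apply]
  simp only [partialTrace, LinearMap.coe_comp, Function.comp_apply, LinearEquiv.coe_coe,
    LinearEquiv.symm_apply_apply, LinearMap.lTensor_tmul, TensorProduct.rid_tmul]

theorem trace_partialTrace (Φ : Module.End R (V ⊗[R] N)) :
    LinearMap.trace R V (partialTrace R V N Φ) = LinearMap.trace R (V ⊗[R] N) Φ := by
  induction Φ using Module.End.tensorProduct_induction_on with
  | zero => simp
  | add Φ Ψ hΦ hΨ => simp [hΦ, hΨ]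
  | map f g => simp [LinearMap.trace_tensorProduct', mul_comm]

theorem partialTrace_apply {ι : Type*} [Fintype ι] (b : Module.Basis ι R N)
    (Φ : Module.End R (V ⊗[R] N)) (v : V) :
    partialTrace R V N Φ v =
      ∑ j, TensorProduct.rid R V (LinearMap.lTensor V (b.coord j) (Φ (v ⊗ₜ b j))) := by
  classical
  induction Φ using Module.End.tensorProduct_induction_on with
  | zero => simp
  | add Φ Ψ hΦ hΨ => simp [hΦ, hΨ, Finset.sum_add_distrib]
  | map f g =>
    simp [LinearMap.trace_eq_matrix_trace R b, Matrix.trace, LinearMap.toMatrix_apply,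
      Finset.sum_smul]

theorem partialTrace_map_comp_comm (f g : Module.End R V) :
    partialTrace R V V (TensorProduct.map f g ∘ₗ (TensorProduct.comm R V V).toLinearMap) =
      f ∘ₗ g := by
  ext v
  let b := Module.Free.chooseBasis R V
  calc partialTrace R V V (TensorProduct.map f g ∘ₗ (TensorProduct.comm R V V).toLinearMap) v
      = ∑ j, b.repr (g v) j • f (b j) := by simp [partialTrace_apply b]
    _ = f (g v) := by simp_rw [← map_smul, ← map_sum, b.sum_repr]

theorem trace_map_id_comp_lTensor_assoc {U M : Type*} [AddCommGroup U] [Module R U]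
    [Module.Free R U] [Module.Finite R U] [AddCommGroup M] [Module R M]
    [Module.Free R M] [Module.Finite R M]
    (S : Module.End R (U ⊗[R] M)) (Φ : Module.End R (M ⊗[R] N)) :
    LinearMap.trace R ((U ⊗[R] M) ⊗[R] N)
      (TensorProduct.map S LinearMap.id ∘ₗ (TensorProduct.assoc R U M N).symm.toLinearMap
        ∘ₗ LinearMap.lTensor U Φ ∘ₗ (TensorProduct.assoc R U M N).toLinearMap) =
    LinearMap.trace R (U ⊗[R] M) (S ∘ₗ LinearMap.lTensor U (partialTrace R M N Φ)) := by
  induction Φ using Module.End.tensorProduct_induction_on with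
  | zero => simp
  | add Φ Ψ hΦ hΨ => simp [LinearMap.lTensor_add, LinearMap.comp_add, LinearMap.add_comp, hΦ, hΨ]
  | map f g =>
    have reassoc : TensorProduct.map S LinearMap.id
        ∘ₗ (TensorProduct.assoc R U M N).symm.toLinearMap
        ∘ₗ LinearMap.lTensor U (TensorProduct.map f g) ∘ₗ (TensorProduct.assoc R U M N).toLinearMap
          = TensorProduct.map (S ∘ₗ LinearMap.lTensor U f) g :=
      TensorProduct.ext_threefold fun w m n => by simp
    simp [reassoc, LinearMap.trace_tensorProduct', LinearMap.lTensor_smul, LinearMap.comp_smul,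
      mul_comm]

end PartialTrace

section RMatrix

variable {A : Type u} [CommRing A] [Algebra k A]
  {M : Type u} [AddCommGroup M] [Module k M] [Module A M] [IsScalarTower k A M]

theorem Rmat_add (a a' : A ⊗[k] A) : Rmat k A M (a + a') = Rmat k A M a + Rmat k A M a' := by
  simp [Rmat, LinearMap.add_comp]

theorem Rmat_tmul (x y : A) :
    Rmat k A M (x ⊗ₜ y) = TensorProduct.map (Algebra.lsmul k k M x) (Algebra.lsmul k k M y)
      ∘ₗ (TensorProduct.comm k M M).toLinearMap := by
  simp [Rmat, tensorSquareAction]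

variable [FiniteDimensional k M]

theorem partialTrace_Rmat (a : A ⊗[k] A) :
    partialTrace k M M (Rmat k A M a) = Algebra.lsmul k k M (LinearMap.mul' k A a) := by
  induction a using TensorProduct.induction_on with
  | zero => simp [Rmat]
  | tmul x y => rw [Rmat_tmul, partialTrace_map_comp_comm, LinearMap.mul'_apply, map_mul]; rfl
  | add a a' ha ha' => rw [Rmat_add, map_add, ha, ha', map_add, map_add]

theorem partialTrace_Rmat_of_mul'_eq_algebraMap {a : A ⊗[k] A} {ε : k}
    (hμ : LinearMap.mul' k A a = algebraMap k A ε) :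
    partialTrace k M M (Rmat k A M a) = ε • LinearMap.id := by
  ext m
  simp [partialTrace_Rmat, hμ]

end RMatrix

instance W.finiteDimensional (M : Type u) [AddCommGroup M] [Module k M] [FiniteDimensional k M] :
    ∀ m, FiniteDimensional k (W k M m)
  | 0 => inferInstanceAs (FiniteDimensional k M)
  | m + 1 =>
    have := W.finiteDimensional M m
    inferInstanceAs (FiniteDimensional k (W k M m ⊗[k] M))

section RRlinProd

variable {M : Type u} [AddCommGroup M] [Module k M] (Rm : M ⊗[k] M →ₗ[k] M ⊗[k] M)

def RRlinProd (m : ℕ) : Module.End k (W k M m) :=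
  ((List.finRange m).map fun i => RRlin Rm m i.val i.isLt).prod

theorem RRlinProd_one : RRlinProd Rm 1 = Rm := rfl

theorem RRlin_succ_of_lt {m i : ℕ} (hi : i + 1 ≤ m) :
    RRlin Rm (m + 1) i (by omega) = TensorProduct.map (RRlin Rm m i hi) LinearMap.id := by
  rw [RRlin]; exact dif_pos hi

theorem RRlin_last (m : ℕ) :
    RRlin Rm (m + 2) (m + 1) le_rfl =
      (TensorProduct.assoc k (W k M m) M M).symm.toLinearMap
        ∘ₗ LinearMap.lTensor (W k M m) Rm ∘ₗ (TensorProduct.assoc k (W k M m) M M).toLinearMap := by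
  rw [RRlin]; exact dif_neg (by omega)

theorem RRlinProd_succ_succ (m : ℕ) :
    RRlinProd Rm (m + 2) =
      TensorProduct.map (RRlinProd Rm (m + 1)) LinearMap.id
        ∘ₗ (TensorProduct.assoc k (W k M m) M M).symm.toLinearMap
        ∘ₗ LinearMap.lTensor (W k M m) Rm ∘ₗ (TensorProduct.assoc k (W k M m) M M).toLinearMap := by
  simp only [RRlinProd, ← List.ofFn_eq_map]
  rw [List.ofFn_succ', List.concat_eq_append, List.prod_append, List.prod_singleton]
  refine congrArg₂ (· * ·) ?_ (RRlin_last Rm m)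
  change _ = Module.End.rTensorAlgHom k _ M _
  rw [map_list_prod, List.map_ofFn]
  exact congrArg List.prod (congrArg List.ofFn (funext fun i => RRlin_succ_of_lt Rm i.isLt))

end RRlinProd

section Trace

variable {A : Type u} [CommRing A] [Algebra k A]
  {M : Type u} [AddCommGroup M] [Module k M] [Module A M] [IsScalarTower k A M]
  [FiniteDimensional k M]

theorem trace_RRlinProd_Rmat {a : A ⊗[k] A} {ε : k}
    (hμ : LinearMap.mul' k A a = algebraMap k A ε) (m : ℕ) :
    LinearMap.trace k (W k M (m + 1)) (RRlinProd (Rmat k A M a) (m + 1)) =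
      ε ^ (m + 1) * Module.finrank k M := by
  have hR := partialTrace_Rmat_of_mul'_eq_algebraMap (M := M) hμ
  induction m with
  | zero => exact (trace_partialTrace (Rmat k A M a)).symm.trans (by simp [hR])
  | succ m ih =>
    rw [RRlinProd_succ_succ]
    refine (trace_map_id_comp_lTensor_assoc _ _).trans ?_
    rw [hR, LinearMap.lTensor_smul, LinearMap.lTensor_id]
    -- `W k M m ⊗[k] M` and `W k M (m + 1)` agree only up to unfolding `W`
    change LinearMap.trace k (W k M (m + 1))
      (RRlinProd _ (m + 1) ∘ₗ (ε • (LinearMap.id : Module.End k (W k M (m + 1))))) = _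
    rw [LinearMap.comp_smul, LinearMap.comp_id, map_smul, ih, smul_eq_mul]
    ring

end Trace

theorem trace_of_R_matrix_from_commutative_algebra_general
    (A : Type u) [CommRing A] [Algebra k A]
    (M : Type u) [AddCommGroup M] [Module k M] [Module A M] [IsScalarTower k A M]
    [FiniteDimensional k M]
    (a : A ⊗[k] A)
    (ε : k)
    (hμ : LinearMap.mul' k A a = algebraMap k A ε)
    (n : ℕ) (hn : 2 ≤ n) :
    LinearMap.trace k (W k M (n - 1))
        (((List.finRange (n - 1)).map fun i =>
            RRlin (Rmat k A M a) (n - 1) i.val i.isLt).prod)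
      = ε ^ (n - 1) * (Module.finrank k M : k) := by
  obtain ⟨m, rfl⟩ : ∃ m, n = m + 2 := ⟨n - 2, by omega⟩
  exact trace_RRlinProd_Rmat hμ m

/-- for `R = R(A,a,M)` with `a·τ(a) = 1` and `μ(a) = ε·1` (`ε = ±1`), the trace
of `R₁ R₂ ⋯ R_{n-1}` on `M^{⊗n}` equals `ε^{n-1}·dim_k M` for every `n ≥ 2`. -/
theorem trace_of_R_matrix_from_commutative_algebra
    (A : Type u) [CommRing A] [Algebra k A]
    (M : Type u) [AddCommGroup M] [Module k M] [Module A M] [IsScalarTower k A M]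
    [FiniteDimensional k M]
    (a : A ⊗[k] A) (ha : a * (Algebra.TensorProduct.comm k A A) a = 1)
    (ε : k) (hε : ε = 1 ∨ ε = -1)
    (hμ : LinearMap.mul' k A a = algebraMap k A ε)
    (n : ℕ) (hn : 2 ≤ n) :
    LinearMap.trace k (W k M (n - 1))
        (((List.finRange (n - 1)).map fun i =>
            RRlin (Rmat k A M a) (n - 1) i.val i.isLt).prod)
      = ε ^ (n - 1) * (Module.finrank k M : k) :=
  trace_of_R_matrix_from_commutative_algebra_general A M a ε hμ n hn

end
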